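/- The polynomial −3625·p₁⁴ + 1590·p₁³p₂ + 7129·p₁²p₂² − 50·p₁²p₀² + 8866·p₁p₂³ + 304·p₁p₂p₀² − 8049·p₂⁴ − 14·p₂²p₀² + p₀⁴, viewed as an element of ℂ[p₀,p₁,p₂], is irreducible. -/

import Mathlib

/-!
As a polynomial in `p₀` over the domain `R = ℂ[p₁, p₂]`, the quartic is the monic biquadratic
`p₀⁴ + A p₀² + B`. A monic factorization of a biquadratic over a domain has either a linear factor,
and a root `r` makes `A² - 4B = (2r² + A)²` a square, or two monic quadratic factors
`(p₀² + p p₀ + q)(p₀² + u p₀ + v)`; comparing coefficients gives `u = -p` and `p (v - q) = 0`, so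
`A² - 4B = (q - v)²` or `B = q²`. Neither `A² - 4B` nor `B` is a square in `R`: setting `p₂ = 1`
turns them into univariate quartics that are coprime to their derivatives.
-/

open MvPolynomial

/-- The homogenized slowness polynomial of the two-dimensional stiffness tensor with Voigt
parameters `(20, 39, −65, −16, −87, 30)`, as an element of `ℂ[p₀,p₁,p₂]` (with `p₀ = X 0`,
`p₁ = X 1`, `p₂ = X 2`). -/
noncomputable def slownessPolyExample2D : MvPolynomial (Fin 3) ℂ :=
  C (-3625) * X 1 ^ 4 + C 1590 * X 1 ^ 3 * X 2 + C 7129 * X 1 ^ 2 * X 2 ^ 2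
    + C (-50) * X 1 ^ 2 * X 0 ^ 2 + C 8866 * X 1 * X 2 ^ 3 + C 304 * X 1 * X 2 * X 0 ^ 2
    + C (-8049) * X 2 ^ 4 + C (-14) * X 2 ^ 2 * X 0 ^ 2 + X 0 ^ 4

namespace Polynomial

theorem Monic.eq_X_sq_add_C_mul_X_add_C {R : Type*} [Semiring R] {g : R[X]} (hg : g.Monic)
    (h2 : g.natDegree = 2) : g = X ^ 2 + C (g.coeff 1) * X + C (g.coeff 0) := by
  ext (_ | _ | _ | n)
  · simp
  · simp
  · simpa [coeff_X_pow, h2] using hg.coeff_natDegree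
  · rw [coeff_eq_zero_of_natDegree_lt (by omega)]
    simp [coeff_X_pow]

variable {R : Type*} [CommRing R]

theorem isSquare_discrim_of_isRoot_biquadratic {a b r : R}
    (h : (X ^ 4 + C a * X ^ 2 + C b : R[X]).IsRoot r) : IsSquare (discrim 1 a b) := by
  have hr : r ^ 2 * r ^ 2 + a * r ^ 2 + b = 0 := by linear_combination (by simpa using h : _ = _)
  exact ⟨2 * r ^ 2 + a, by rw [discrim_eq_sq_of_quadratic_eq_zero (by simpa using hr)]; ring⟩

theorem isSquare_discrim_or_isSquare_of_biquadratic_eq_mul [NoZeroDivisors R] {a b p q u v : R}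
    (h : (X ^ 2 + C p * X + C q) * (X ^ 2 + C u * X + C v) = (X ^ 4 + C a * X ^ 2 + C b : R[X])) :
    IsSquare (discrim 1 a b) ∨ IsSquare b := by
  have hexp : (X ^ 2 + C p * X + C q) * (X ^ 2 + C u * X + C v) = X ^ 4 + C (p + u) * X ^ 3
      + C (q + p * u + v) * X ^ 2 + C (p * v + q * u) * X + C (q * v) := by
    simp only [map_add, map_mul]; ring
  rw [hexp] at h
  have h3 : p + u = 0 := by simpa [coeff_X, -map_add, -map_mul] using congrArg (coeff · 3) h
  have h2 : q + p * u + v = a := by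
    simpa [coeff_X, -map_add, -map_mul] using congrArg (coeff · 2) h
  have h1 : p * v + q * u = 0 := by
    simpa [coeff_X, -map_add, -map_mul] using congrArg (coeff · 1) h
  have h0 : q * v = b := by simpa using congrArg (coeff · 0) h
  have hpvq : p * (v - q) = 0 := by linear_combination h1 - q * h3
  rcases mul_eq_zero.mp hpvq with rfl | hvq
  · obtain rfl : u = 0 := by simpa using h3
    exact .inl ⟨q - v, by rw [discrim, ← h2, ← h0]; ring⟩
  · exact .inr ⟨q, by rw [← h0, sub_eq_zero.mp hvq]⟩

theorem irreducible_biquadratic [IsDomain R] {a b : R} (hD : ¬IsSquare (discrim 1 a b))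
    (hb : ¬IsSquare b) : Irreducible (X ^ 4 + C a * X ^ 2 + C b : R[X]) := by
  have hmonic : (X ^ 4 + C a * X ^ 2 + C b : R[X]).Monic := by monicity!
  have hdeg : (X ^ 4 + C a * X ^ 2 + C b : R[X]).natDegree = 4 := by compute_degree!
  refine hmonic.irreducible_iff_natDegree'.mpr ⟨fun h1 => by simp [h1] at hdeg, ?_⟩
  intro f g hf hg hfg hg12
  rw [hdeg] at hg12
  have hfg_deg : f.natDegree + g.natDegree = 4 := by rw [← hf.natDegree_mul hg, hfg, hdeg]
  obtain hg1 | hg2 : g.natDegree = 1 ∨ g.natDegree = 2 := by simp at hg12; omega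
  · refine hD (isSquare_discrim_of_isRoot_biquadratic (r := -g.coeff 0) ?_)
    rw [← hfg, hg.eq_X_add_C hg1]
    simp
  · rw [hf.eq_X_sq_add_C_mul_X_add_C (by omega), hg.eq_X_sq_add_C_mul_X_add_C hg2] at hfg
    exact (isSquare_discrim_or_isSquare_of_biquadratic_eq_mul hfg).elim hD hb

theorem not_isSquare_of_separable [NoZeroDivisors R] {p : R[X]} (hp : p.Separable)
    (hdeg : p.natDegree ≠ 0) : ¬IsSquare p := by
  rintro ⟨r, rfl⟩
  have hr : IsUnit r := hp.squarefree r dvd_rfl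
  exact hdeg (natDegree_eq_zero_of_isUnit (hr.mul hr))

theorem separable_of_mul_add_mul_derivative_eq_C {K : Type*} [Field K] {p u v : K[X]} {N : K}
    (hN : N ≠ 0) (h : u * p + v * derivative p = C N) : p.Separable := by
  have hNinv : C N⁻¹ * C N = 1 := by rw [← C_mul, inv_mul_cancel₀ hN, C_1]
  exact ⟨C N⁻¹ * u, C N⁻¹ * v, by linear_combination C N⁻¹ * h + hNinv⟩

end Polynomial

namespace SlownessPolyExample2D

noncomputable def coeffA : MvPolynomial (Fin 2) ℂ :=
  C (-50) * X 0 ^ 2 + C 304 * X 0 * X 1 + C (-14) * X 1 ^ 2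

noncomputable def coeffB : MvPolynomial (Fin 2) ℂ :=
  C (-3625) * X 0 ^ 4 + C 1590 * X 0 ^ 3 * X 1 + C 7129 * X 0 ^ 2 * X 1 ^ 2
    + C 8866 * X 0 * X 1 ^ 3 + C (-8049) * X 1 ^ 4

theorem finSuccEquiv_slownessPolyExample2D :
    finSuccEquiv ℂ 2 slownessPolyExample2D
      = Polynomial.X ^ 4 + Polynomial.C coeffA * Polynomial.X ^ 2 + Polynomial.C coeffB := by
  have hC (c : ℂ) : finSuccEquiv ℂ 2 (C c) = Polynomial.C (C c) := by simp [finSuccEquiv_apply]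
  simp only [slownessPolyExample2D, coeffA, coeffB, map_add, map_mul, map_pow, hC,
    finSuccEquiv_X_zero, show (1 : Fin 3) = Fin.succ 0 from rfl,
    show (2 : Fin 3) = Fin.succ 1 from rfl, finSuccEquiv_X_succ]
  ring

noncomputable def dehomogenize : MvPolynomial (Fin 2) ℂ →ₐ[ℂ] Polynomial ℂ :=
  aeval ![Polynomial.X, 1]

theorem dehomogenize_discrim : dehomogenize (discrim 1 coeffA coeffB)
    = 17000 * Polynomial.X ^ 4 - 36760 * Polynomial.X ^ 3 + 65300 * Polynomial.X ^ 2
      - 43976 * Polynomial.X + 32392 := by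
  simp [dehomogenize, discrim, coeffA, coeffB, map_ofNat]
  ring

theorem dehomogenize_coeffB : dehomogenize coeffB
    = -3625 * Polynomial.X ^ 4 + 1590 * Polynomial.X ^ 3 + 7129 * Polynomial.X ^ 2
      + 8866 * Polynomial.X - 8049 := by
  simp [dehomogenize, coeffB, map_ofNat]
  ring

theorem separable_dehomogenize_discrim : (dehomogenize (discrim 1 coeffA coeffB)).Separable := by
  rw [dehomogenize_discrim]
  -- Bézout certificates from the extended Euclidean algorithm over `ℚ`, denominators cleared.
  refine Polynomial.separable_of_mul_add_mul_derivative_eq_C (N := 1472553722995567855784)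
    (by norm_num)
    (u := -86849803841883000 * Polynomial.X ^ 2 - 45872200765687570 * Polynomial.X
      + 104138206176583640)
    (v := 21712450960470750 * Polynomial.X ^ 3 - 269445357209060 * Polynomial.X ^ 2
      - 9568822701531355 * Polynomial.X + 43221099042121371) ?_
  simp [map_ofNat]
  ring

theorem separable_dehomogenize_coeffB : (dehomogenize coeffB).Separable := by
  rw [dehomogenize_coeffB]
  refine Polynomial.separable_of_mul_add_mul_derivative_eq_C (N := 556291623825141760) (by norm_num)
    (u := 37110250446500 * Polynomial.X ^ 2 + 24524806821410 * Polynomial.X - 40167094292356)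
    (v := -9277562611625 * Polynomial.X ^ 3 - 5113868977595 * Polynomial.X ^ 2
      + 20171482230983 * Polynomial.X + 26278669283326) ?_
  simp [map_ofNat]
  ring

theorem not_isSquare_discrim : ¬IsSquare (discrim 1 coeffA coeffB) := by
  have hdeg : (dehomogenize (discrim 1 coeffA coeffB)).natDegree = 4 := by
    rw [dehomogenize_discrim]; compute_degree!
  exact fun h => Polynomial.not_isSquare_of_separable separable_dehomogenize_discrim (by omega)
    (h.map dehomogenize)

theorem not_isSquare_coeffB : ¬IsSquare coeffB := by
  have hdeg : (dehomogenize coeffB).natDegree = 4 := by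
    rw [dehomogenize_coeffB]; compute_degree!
  exact fun h => Polynomial.not_isSquare_of_separable separable_dehomogenize_coeffB (by omega)
    (h.map dehomogenize)

end SlownessPolyExample2D

open SlownessPolyExample2D in
/-- This explicit homogeneous quartic is irreducible over `ℂ`. -/
theorem slownessPolyExample2D_irreducible : Irreducible slownessPolyExample2D := by
  rw [← MulEquiv.irreducible_iff (finSuccEquiv ℂ 2), finSuccEquiv_slownessPolyExample2D]
  exact Polynomial.irreducible_biquadratic not_isSquare_discrim not_isSquare_coeffB
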